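/- arXiv:math/9909100 — 3 statements merged into one kernel-verified Lean document; each statement's English description precedes it below -/
import Mathlib

section
/- Let η : ℝ × ℝ → ℝ be smooth with η_x > 0, and define u by u(t, η(x,t)) = η_t(x,t). Then the Lagrangian Camassa–Holm equation ½((η_{tx}/η_x)² − η_t²)_x − (η_x η_t)_t + (η_{tx}/η_x)_{xt} = 0 holds at (x,t) if and only if the Eulerian Camassa–Holm equation u_t − u_{yyt} = −3 u u_y + 2 u_y u_{yy} + u u_{yyy} holds at (t, η(x,t)). -/
section CHhelpers

noncomputable def pd1 (f : ℝ × ℝ → ℝ) (p : ℝ × ℝ) : ℝ := fderiv ℝ f p (1, 0)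
noncomputable def pd2 (f : ℝ × ℝ → ℝ) (p : ℝ × ℝ) : ℝ := fderiv ℝ f p (0, 1)

lemma contDiff_pd1 {f : ℝ × ℝ → ℝ} (hf : ContDiff ℝ (⊤ : ℕ∞) f) : ContDiff ℝ (⊤ : ℕ∞) (pd1 f) :=
  (hf.fderiv_right (by simp)).clm_apply contDiff_const

lemma contDiff_pd2 {f : ℝ × ℝ → ℝ} (hf : ContDiff ℝ (⊤ : ℕ∞) f) : ContDiff ℝ (⊤ : ℕ∞) (pd2 f) :=
  (hf.fderiv_right (by simp)).clm_apply contDiff_const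

lemma hasDerivAt_slice1 {f : ℝ × ℝ → ℝ} (hf : Differentiable ℝ f) (x t : ℝ) :
    HasDerivAt (fun x' => f (x', t)) (pd1 f (x, t)) x := by
  have hγ : HasDerivAt (fun x' : ℝ => ((x' : ℝ), t)) ((1 : ℝ), (0 : ℝ)) x :=
    (hasDerivAt_id x).prodMk (hasDerivAt_const x t)
  exact (hf (x, t)).hasFDerivAt.comp_hasDerivAt x hγ

lemma hasDerivAt_slice2 {f : ℝ × ℝ → ℝ} (hf : Differentiable ℝ f) (x t : ℝ) :
    HasDerivAt (fun t' => f (x, t')) (pd2 f (x, t)) t := by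
  have hγ : HasDerivAt (fun t' : ℝ => (x, (t' : ℝ))) ((0 : ℝ), (1 : ℝ)) t :=
    (hasDerivAt_const t x).prodMk (hasDerivAt_id t)
  exact (hf (x, t)).hasFDerivAt.comp_hasDerivAt t hγ

lemma deriv_slice1 {f : ℝ × ℝ → ℝ} (hf : Differentiable ℝ f) (x t : ℝ) :
    deriv (fun x' => f (x', t)) x = pd1 f (x, t) := (hasDerivAt_slice1 hf x t).deriv

lemma deriv_slice2 {f : ℝ × ℝ → ℝ} (hf : Differentiable ℝ f) (x t : ℝ) :
    deriv (fun t' => f (x, t')) t = pd2 f (x, t) := (hasDerivAt_slice2 hf x t).deriv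

lemma fderiv_vec {f : ℝ × ℝ → ℝ} {p : ℝ × ℝ} (hf : DifferentiableAt ℝ f p) (v1 v2 : ℝ) :
    fderiv ℝ f p (v1, v2) = v1 * pd1 f p + v2 * pd2 f p := by
  have h : (v1, v2) = v1 • ((1 : ℝ), (0 : ℝ)) + v2 • ((0 : ℝ), (1 : ℝ)) := by
    simp [Prod.ext_iff]
  rw [h, map_add, map_smul, map_smul]
  simp [pd1, pd2, smul_eq_mul]

lemma pd_comm {f : ℝ × ℝ → ℝ} (hf : ContDiff ℝ (⊤ : ℕ∞) f) (p : ℝ × ℝ) :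
    pd2 (pd1 f) p = pd1 (pd2 f) p := by
  have hd : ∀ y, HasFDerivAt f (fderiv ℝ f y) y :=
    fun y => (hf.differentiable (by simp) y).hasFDerivAt
  have hd2 : HasFDerivAt (fderiv ℝ f) (fderiv ℝ (fderiv ℝ f) p) p :=
    ((hf.fderiv_right (m := (⊤ : ℕ∞)) (by simp)).differentiable (by simp) p).hasFDerivAt
  have hsymm := second_derivative_symmetric hd hd2
  have e1 : HasFDerivAt (pd1 f)
      ((ContinuousLinearMap.apply ℝ ℝ ((1 : ℝ), (0 : ℝ))).comp (fderiv ℝ (fderiv ℝ f) p)) p :=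
    (ContinuousLinearMap.apply ℝ ℝ ((1 : ℝ), (0 : ℝ))).hasFDerivAt.comp p hd2
  have e2 : HasFDerivAt (pd2 f)
      ((ContinuousLinearMap.apply ℝ ℝ ((0 : ℝ), (1 : ℝ))).comp (fderiv ℝ (fderiv ℝ f) p)) p :=
    (ContinuousLinearMap.apply ℝ ℝ ((0 : ℝ), (1 : ℝ))).hasFDerivAt.comp p hd2
  calc pd2 (pd1 f) p = fderiv ℝ (pd1 f) p ((0 : ℝ), (1 : ℝ)) := rfl
    _ = fderiv ℝ (fderiv ℝ f) p ((0 : ℝ), (1 : ℝ)) ((1 : ℝ), (0 : ℝ)) := by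
        rw [e1.fderiv]; rfl
    _ = fderiv ℝ (fderiv ℝ f) p ((1 : ℝ), (0 : ℝ)) ((0 : ℝ), (1 : ℝ)) := (hsymm _ _).symm
    _ = fderiv ℝ (pd2 f) p ((1 : ℝ), (0 : ℝ)) := by rw [e2.fderiv]; rfl
    _ = pd1 (pd2 f) p := rfl

lemma chain_x {G F R : ℝ × ℝ → ℝ} (hG : Differentiable ℝ G) (hF : Differentiable ℝ F)
    (hR : Differentiable ℝ R) (heq : ∀ x t, G (t, F (x, t)) = R (x, t)) (x t : ℝ) :
    pd2 G (t, F (x, t)) * pd1 F (x, t) = pd1 R (x, t) := by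
  have hcurve : HasDerivAt (fun x' => (t, F (x', t))) ((0 : ℝ), pd1 F (x, t)) x :=
    (hasDerivAt_const x t).prodMk (hasDerivAt_slice1 hF x t)
  have h1 : HasDerivAt (fun x' => G (t, F (x', t)))
      (fderiv ℝ G (t, F (x, t)) (0, pd1 F (x, t))) x :=
    (hG _).hasFDerivAt.comp_hasDerivAt x hcurve
  have hfun : (fun x' => G (t, F (x', t))) = fun x' => R (x', t) := funext fun x' => heq x' t
  rw [hfun] at h1
  have h3 := h1.unique (hasDerivAt_slice1 hR x t)
  rw [fderiv_vec (hG _) 0 (pd1 F (x, t))] at h3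
  linear_combination h3

lemma chain_t {G F R : ℝ × ℝ → ℝ} (hG : Differentiable ℝ G) (hF : Differentiable ℝ F)
    (hR : Differentiable ℝ R) (heq : ∀ x t, G (t, F (x, t)) = R (x, t)) (x t : ℝ) :
    pd1 G (t, F (x, t)) + pd2 G (t, F (x, t)) * pd2 F (x, t) = pd2 R (x, t) := by
  have hcurve : HasDerivAt (fun t' => (t', F (x, t'))) ((1 : ℝ), pd2 F (x, t)) t :=
    (hasDerivAt_id t).prodMk (hasDerivAt_slice2 hF x t)
  have h1 : HasDerivAt (fun t' => G (t', F (x, t')))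
      (fderiv ℝ G (t, F (x, t)) (1, pd2 F (x, t))) t :=
    (hG _).hasFDerivAt.comp_hasDerivAt t hcurve
  have hfun : (fun t' => G (t', F (x, t'))) = fun t' => R (x, t') := funext fun t' => heq x t'
  rw [hfun] at h1
  have h3 := h1.unique (hasDerivAt_slice2 hR x t)
  rw [fderiv_vec (hG _) 1 (pd2 F (x, t))] at h3
  linear_combination h3

end CHhelpers

/-- `η_x`. -/
noncomputable def etaX (η : ℝ → ℝ → ℝ) (x t : ℝ) : ℝ := deriv (fun x' => η x' t) x
/-- `η_t`. -/
noncomputable def etaT (η : ℝ → ℝ → ℝ) (x t : ℝ) : ℝ := deriv (fun t' => η x t') t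
/-- `η_{tx} = ∂_x η_t`. -/
noncomputable def etaTX (η : ℝ → ℝ → ℝ) (x t : ℝ) : ℝ := deriv (fun x' => etaT η x' t) x

/-- Left-hand side of the Lagrangian Camassa–Holm equation
`½((η_{tx}/η_x)² − η_t²)_x − (η_x η_t)_t + (η_{tx}/η_x)_{xt}`. -/
noncomputable def lagrCH (η : ℝ → ℝ → ℝ) (x t : ℝ) : ℝ :=
  (1 / 2) * deriv (fun x' => (etaTX η x' t / etaX η x' t) ^ 2 - (etaT η x' t) ^ 2) x
    - deriv (fun t' => etaX η x t' * etaT η x t') t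
    + deriv (fun t' => deriv (fun x' => etaTX η x' t' / etaX η x' t') x) t

/-- The Lagrangian CH equation holds at `(x,t)` iff the Eulerian CH equation
`u_t − u_{yyt} = −3uu_y + 2u_yu_{yy} + uu_{yyy}` holds at `(t, η(x,t))`. -/
theorem stmt7 (η : ℝ → ℝ → ℝ)
    (hη : ContDiff ℝ (⊤ : ℕ∞) (fun p : ℝ × ℝ => η p.1 p.2))
    (hdiffeo : ∀ t, Function.Bijective fun x => η x t)
    (hpos : ∀ x t, 0 < etaX η x t)
    (u : ℝ → ℝ → ℝ)
    (hu : ContDiff ℝ (⊤ : ℕ∞) (fun p : ℝ × ℝ => u p.1 p.2))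
    (hdef : ∀ x t, u t (η x t) = etaT η x t) :
    ∀ x t, (lagrCH η x t = 0 ↔
      deriv (fun t' => u t' (η x t)) t
        - deriv (fun t' => deriv (deriv (u t')) (η x t)) t
      = -3 * u t (η x t) * deriv (u t) (η x t)
        + 2 * deriv (u t) (η x t) * deriv (deriv (u t)) (η x t)
        + u t (η x t) * deriv (deriv (deriv (u t))) (η x t)) := by
  classical
  set F : ℝ × ℝ → ℝ := fun p => η p.1 p.2 with hFdef
  set U : ℝ × ℝ → ℝ := fun p => u p.1 p.2 with hUdef
  have hFd : Differentiable ℝ F := hη.differentiable (by simp)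
  have hUd : Differentiable ℝ U := hu.differentiable (by simp)
  have ha : ContDiff ℝ (⊤ : ℕ∞) (pd1 F) := contDiff_pd1 hη
  have hb : ContDiff ℝ (⊤ : ℕ∞) (pd2 F) := contDiff_pd2 hη
  have hc : ContDiff ℝ (⊤ : ℕ∞) (pd1 (pd2 F)) := contDiff_pd1 hb
  have had := ha.differentiable (by simp)
  have hbd := hb.differentiable (by simp)
  have hcd := hc.differentiable (by simp)
  have hU2 : ContDiff ℝ (⊤ : ℕ∞) (pd2 U) := contDiff_pd2 hu
  have hU22 : ContDiff ℝ (⊤ : ℕ∞) (pd2 (pd2 U)) := contDiff_pd2 hU2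
  have hU2d := hU2.differentiable (by simp)
  have hU22d := hU22.differentiable (by simp)
  have hU222d := (contDiff_pd2 hU22).differentiable (by simp)
  -- etaX etc in terms of pd
  have hX : ∀ x t, etaX η x t = pd1 F (x, t) := fun x t => deriv_slice1 hFd x t
  have hT : ∀ x t, etaT η x t = pd2 F (x, t) := fun x t => deriv_slice2 hFd x t
  have haPos : ∀ p : ℝ × ℝ, 0 < pd1 F p := by
    intro p
    have := hpos p.1 p.2
    rwa [hX] at this
  have haNe : ∀ p : ℝ × ℝ, pd1 F p ≠ 0 := fun p => ne_of_gt (haPos p)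
  have hTX : ∀ x t, etaTX η x t = pd1 (pd2 F) (x, t) := by
    intro x t
    have hfun : (fun x' => etaT η x' t) = fun x' => pd2 F (x', t) := funext fun x' => hT x' t
    rw [etaTX, hfun]
    exact deriv_slice1 hbd x t
  -- V = η_tx / η_x as a smooth function, V2 = (pd1 V)/a
  set V : ℝ × ℝ → ℝ := fun p => pd1 (pd2 F) p / pd1 F p with hVdef
  have hV : ContDiff ℝ (⊤ : ℕ∞) V := hc.div ha haNe
  have hVd := hV.differentiable (by simp)
  have hV1 : ContDiff ℝ (⊤ : ℕ∞) (pd1 V) := contDiff_pd1 hV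
  have hV1d := hV1.differentiable (by simp)
  set V2 : ℝ × ℝ → ℝ := fun p => pd1 V p / pd1 F p with hV2def
  have hV2 : ContDiff ℝ (⊤ : ℕ∞) V2 := hV1.div ha haNe
  have hV2d := hV2.differentiable (by simp)
  -- basic composition identity
  have hH : ∀ x t, U (t, F (x, t)) = pd2 F (x, t) := fun x t => (hdef x t).trans (hT x t)
  -- chain rule consequences
  have E1 : ∀ x t, pd2 U (t, F (x, t)) = V (x, t) := by
    intro x t
    have h := chain_x hUd hFd hbd hH x t
    have hv : V (x, t) = pd1 (pd2 F) (x, t) / pd1 F (x, t) := rfl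
    rw [hv, eq_div_iff (haNe (x, t))]
    exact h
  have E2 : ∀ x t, pd2 (pd2 U) (t, F (x, t)) = V2 (x, t) := by
    intro x t
    have h := chain_x hU2d hFd hVd E1 x t
    have hv : V2 (x, t) = pd1 V (x, t) / pd1 F (x, t) := rfl
    rw [hv, eq_div_iff (haNe (x, t))]
    exact h
  have E3 : ∀ x t, pd2 (pd2 (pd2 U)) (t, F (x, t)) = pd1 V2 (x, t) / pd1 F (x, t) := by
    intro x t
    have h := chain_x hU22d hFd hV2d E2 x t
    rw [eq_div_iff (haNe (x, t))]
    exact h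
  have E4 : ∀ x t, pd1 U (t, F (x, t)) = pd2 (pd2 F) (x, t) - V (x, t) * pd2 F (x, t) := by
    intro x t
    have h := chain_t hUd hFd hbd hH x t
    rw [E1] at h
    linarith
  have E5 : ∀ x t, pd1 (pd2 (pd2 U)) (t, F (x, t))
      = pd2 V2 (x, t) - (pd1 V2 (x, t) / pd1 F (x, t)) * pd2 F (x, t) := by
    intro x t
    have h := chain_t hU22d hFd hV2d E2 x t
    rw [E3] at h
    linarith
  intro x t
  -- rewrite the Lagrangian side
  have hSch : pd2 (pd1 F) (x, t) = pd1 (pd2 F) (x, t) := pd_comm hη (x, t)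
  have hca : pd1 (pd2 F) (x, t) = V (x, t) * pd1 F (x, t) :=
    (div_mul_cancel₀ _ (haNe (x, t))).symm
  have hT1 : deriv (fun x' => (etaTX η x' t / etaX η x' t) ^ 2 - (etaT η x' t) ^ 2) x
      = 2 * V (x, t) * pd1 V (x, t) - 2 * pd2 F (x, t) * pd1 (pd2 F) (x, t) := by
    have hfun : (fun x' => (etaTX η x' t / etaX η x' t) ^ 2 - (etaT η x' t) ^ 2)
        = fun x' => V (x', t) ^ 2 - pd2 F (x', t) ^ 2 := by
      funext x'
      rw [hTX, hX, hT]
    rw [hfun]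
    have h1 := ((hasDerivAt_slice1 hVd x t).pow 2).sub ((hasDerivAt_slice1 hbd x t).pow 2)
    rw [show (fun x' => V (x', t) ^ 2 - pd2 F (x', t) ^ 2) = (fun x' => V (x', t)) ^ 2 - (fun x' => pd2 F (x', t)) ^ 2 from rfl, h1.deriv]
    ring
  have hT2 : deriv (fun t' => etaX η x t' * etaT η x t') t
      = pd1 (pd2 F) (x, t) * pd2 F (x, t) + pd1 F (x, t) * pd2 (pd2 F) (x, t) := by
    have hfun : (fun t' => etaX η x t' * etaT η x t')
        = fun t' => pd1 F (x, t') * pd2 F (x, t') := by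
      funext t'
      rw [hX, hT]
    rw [hfun]
    have h1 := (hasDerivAt_slice2 had x t).mul (hasDerivAt_slice2 hbd x t)
    rw [show (fun t' => pd1 F (x, t') * pd2 F (x, t')) = (fun t' => pd1 F (x, t')) * (fun t' => pd2 F (x, t')) from rfl, h1.deriv, hSch]
  have hdV : pd1 V (x, t) = V2 (x, t) * pd1 F (x, t) :=
    (div_mul_cancel₀ _ (haNe (x, t))).symm
  have hdVfun : pd1 V = fun q => V2 q * pd1 F q := by
    funext q
    exact (div_mul_cancel₀ _ (haNe q)).symm
  have hT3 : deriv (fun t' => deriv (fun x' => etaTX η x' t' / etaX η x' t') x) t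
      = pd2 V2 (x, t) * pd1 F (x, t) + V2 (x, t) * pd1 (pd2 F) (x, t) := by
    have hfun : (fun t' => deriv (fun x' => etaTX η x' t' / etaX η x' t') x)
        = fun t' => pd1 V (x, t') := by
      funext t'
      have hfun2 : (fun x' => etaTX η x' t' / etaX η x' t') = fun x' => V (x', t') := by
        funext x'
        rw [hTX, hX]
      rw [hfun2]
      exact deriv_slice1 hVd x t'
    rw [hfun, deriv_slice2 hV1d x t, hdVfun]
    have hprodd : Differentiable ℝ (fun q => V2 q * pd1 F q) := hV2d.mul had
    have h1 := (hasDerivAt_slice2 hV2d x t).mul (hasDerivAt_slice2 had x t)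
    rw [← deriv_slice2 hprodd x t, show (fun t' => V2 (x, t') * pd1 F (x, t')) = (fun t' => V2 (x, t')) * (fun t' => pd1 F (x, t')) from rfl, h1.deriv, hSch]
  have hLagr : lagrCH η x t
      = (1 / 2) * (2 * V (x, t) * pd1 V (x, t) - 2 * pd2 F (x, t) * pd1 (pd2 F) (x, t))
        - (pd1 (pd2 F) (x, t) * pd2 F (x, t) + pd1 F (x, t) * pd2 (pd2 F) (x, t))
        + (pd2 V2 (x, t) * pd1 F (x, t) + V2 (x, t) * pd1 (pd2 F) (x, t)) := by
    rw [lagrCH, hT1, hT2, hT3]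
  -- rewrite the Eulerian side
  have R1 : u t (η x t) = pd2 F (x, t) := hH x t
  have R2 : deriv (u t) (η x t) = V (x, t) := by
    have h : deriv (u t) (η x t) = pd2 U (t, η x t) := deriv_slice2 hUd t (η x t)
    rw [h]
    exact E1 x t
  have hduf : ∀ t' : ℝ, deriv (u t') = fun y => pd2 U (t', y) := by
    intro t'
    funext y
    exact deriv_slice2 hUd t' y
  have hdduf : ∀ t' : ℝ, deriv (deriv (u t')) = fun y => pd2 (pd2 U) (t', y) := by
    intro t'
    funext y
    rw [hduf t']
    exact deriv_slice2 hU2d t' y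
  have R3 : deriv (deriv (u t)) (η x t) = V2 (x, t) := by
    rw [hdduf t]
    exact E2 x t
  have R4 : deriv (deriv (deriv (u t))) (η x t) = pd1 V2 (x, t) / pd1 F (x, t) := by
    rw [hdduf t]
    have h : deriv (fun y => pd2 (pd2 U) (t, y)) (η x t)
        = pd2 (pd2 (pd2 U)) (t, η x t) := deriv_slice2 hU22d t (η x t)
    rw [h]
    exact E3 x t
  have R5 : deriv (fun t' => u t' (η x t)) t
      = pd2 (pd2 F) (x, t) - V (x, t) * pd2 F (x, t) := by
    have h : deriv (fun t' => u t' (η x t)) t = pd1 U (t, η x t) :=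
      deriv_slice1 hUd t (η x t)
    rw [h]
    exact E4 x t
  have R6 : deriv (fun t' => deriv (deriv (u t')) (η x t)) t
      = pd2 V2 (x, t) - (pd1 V2 (x, t) / pd1 F (x, t)) * pd2 F (x, t) := by
    have hfun : (fun t' => deriv (deriv (u t')) (η x t))
        = fun t' => pd2 (pd2 U) (t', η x t) := by
      funext t'
      rw [hdduf t']
    rw [hfun]
    have h : deriv (fun t' => pd2 (pd2 U) (t', η x t)) t
        = pd1 (pd2 (pd2 U)) (t, η x t) := deriv_slice1 hU22d t (η x t)
    rw [h]
    exact E5 x t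
  rw [hLagr, R5, R6, R1, R2, R3, R4]
  -- now pure algebra
  have key : (1 / 2) * (2 * V (x, t) * pd1 V (x, t) - 2 * pd2 F (x, t) * pd1 (pd2 F) (x, t))
        - (pd1 (pd2 F) (x, t) * pd2 F (x, t) + pd1 F (x, t) * pd2 (pd2 F) (x, t))
        + (pd2 V2 (x, t) * pd1 F (x, t) + V2 (x, t) * pd1 (pd2 F) (x, t))
      = -(pd1 F (x, t)) *
        ((pd2 (pd2 F) (x, t) - V (x, t) * pd2 F (x, t)
          - (pd2 V2 (x, t) - pd1 V2 (x, t) / pd1 F (x, t) * pd2 F (x, t)))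
         - (-3 * pd2 F (x, t) * V (x, t) + 2 * V (x, t) * V2 (x, t)
            + pd2 F (x, t) * (pd1 V2 (x, t) / pd1 F (x, t)))) := by
    rw [hca, hdV]
    field_simp
    ring
  rw [key, neg_mul, neg_eq_zero, mul_eq_zero, sub_eq_zero]
  simp [haNe (x, t)]
end

section
/- Let Z : ℝ² → ℝ⁶ be smooth (a function of (x,t)) and let B₁, B₀ be constant skew-symmetric 6×6 matrices with associated 2-forms ω^ν(u,v) = vᵀB_ν u. If V, W : ℝ² → ℝ⁶ are smooth and satisfy the first-variation equations ∂_x(B₁V) + ∂_t(B₀V) = A(x,t)V and ∂_x(B₁W) + ∂_t(B₀W) = A(x,t)W for a symmetric-matrix-valued function A = A(x,t) (A(x,t)ᵀ = A(x,t)), then the conservation law ∂_x ω¹(V,W) + ∂_t ω⁰(V,W) = 0 holds identically. -/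
lemma aux_hasDerivAt_x {F : ℝ → ℝ → Fin 6 → ℝ}
    (hF : ContDiff ℝ (⊤ : ℕ∞) (fun p : ℝ × ℝ => F p.1 p.2)) (t x : ℝ) (i : Fin 6) :
    HasDerivAt (fun x' => F x' t i) (deriv (fun x' => F x' t i) x) x := by
  have h : Differentiable ℝ (fun x' => F x' t i) := by
    have hc : ContDiff ℝ (⊤ : ℕ∞) (fun x' : ℝ => (x', t)) := contDiff_id.prodMk contDiff_const
    exact ((contDiff_pi.1 hF i).comp hc).differentiable (by simp)
  exact (h x).hasDerivAt

lemma aux_hasDerivAt_t {F : ℝ → ℝ → Fin 6 → ℝ}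
    (hF : ContDiff ℝ (⊤ : ℕ∞) (fun p : ℝ × ℝ => F p.1 p.2)) (x t : ℝ) (i : Fin 6) :
    HasDerivAt (fun t' => F x t' i) (deriv (fun t' => F x t' i) t) t := by
  have h : Differentiable ℝ (fun t' => F x t' i) := by
    have hc : ContDiff ℝ (⊤ : ℕ∞) (fun t' : ℝ => (x, t')) := contDiff_const.prodMk contDiff_id
    exact ((contDiff_pi.1 hF i).comp hc).differentiable (by simp)
  exact (h t).hasDerivAt

/-- Bridges' multisymplectic conservation law for linearized multisymplectic
Hamiltonian systems: if `V`, `W` solve `∂_x(B₁·) + ∂_t(B₀·) = A(x,t)·` with `A`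
symmetric, then `∂_x ω¹(V,W) + ∂_t ω⁰(V,W) = 0`. -/
theorem stmt11 (B1 B0 : Matrix (Fin 6) (Fin 6) ℝ)
    (hB1 : B1.transpose = -B1) (hB0 : B0.transpose = -B0)
    (Z : ℝ → ℝ → Fin 6 → ℝ)
    (hZ : ContDiff ℝ (⊤ : ℕ∞) (fun p : ℝ × ℝ => Z p.1 p.2))
    (A : ℝ → ℝ → Matrix (Fin 6) (Fin 6) ℝ)
    (hA : ∀ x t, (A x t).transpose = A x t)
    (V W : ℝ → ℝ → Fin 6 → ℝ)
    (hV : ContDiff ℝ (⊤ : ℕ∞) (fun p : ℝ × ℝ => V p.1 p.2))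
    (hW : ContDiff ℝ (⊤ : ℕ∞) (fun p : ℝ × ℝ => W p.1 p.2))
    (heqV : ∀ x t i, deriv (fun x' => B1.mulVec (V x' t) i) x
        + deriv (fun t' => B0.mulVec (V x t') i) t = (A x t).mulVec (V x t) i)
    (heqW : ∀ x t i, deriv (fun x' => B1.mulVec (W x' t) i) x
        + deriv (fun t' => B0.mulVec (W x t') i) t = (A x t).mulVec (W x t) i) :
    ∀ x t,
      deriv (fun x' => dotProduct (W x' t) (B1.mulVec (V x' t))) x
        + deriv (fun t' => dotProduct (W x t') (B0.mulVec (V x t'))) t = 0 := by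
  intro x t
  set v : Fin 6 → ℝ := V x t with hv
  set w : Fin 6 → ℝ := W x t with hw
  set vx : Fin 6 → ℝ := fun i => deriv (fun x' => V x' t i) x with hvx
  set vt : Fin 6 → ℝ := fun i => deriv (fun t' => V x t' i) t with hvt
  set wx : Fin 6 → ℝ := fun i => deriv (fun x' => W x' t i) x with hwx
  set wt : Fin 6 → ℝ := fun i => deriv (fun t' => W x t' i) t with hwt
  have hVx : ∀ i, HasDerivAt (fun x' => V x' t i) (vx i) x := aux_hasDerivAt_x hV t x
  have hVt : ∀ i, HasDerivAt (fun t' => V x t' i) (vt i) t := aux_hasDerivAt_t hV x t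
  have hWx : ∀ i, HasDerivAt (fun x' => W x' t i) (wx i) x := aux_hasDerivAt_x hW t x
  have hWt : ∀ i, HasDerivAt (fun t' => W x t' i) (wt i) t := aux_hasDerivAt_t hW x t
  have hB1Vx : ∀ i, HasDerivAt (fun x' => B1.mulVec (V x' t) i) (B1.mulVec vx i) x := by
    intro i
    simpa [Matrix.mulVec, dotProduct] using
      (HasDerivAt.fun_sum (u := Finset.univ) (fun j _ => (hVx j).const_mul (B1 i j)))
  have hB0Vt : ∀ i, HasDerivAt (fun t' => B0.mulVec (V x t') i) (B0.mulVec vt i) t := by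
    intro i
    simpa [Matrix.mulVec, dotProduct] using
      (HasDerivAt.fun_sum (u := Finset.univ) (fun j _ => (hVt j).const_mul (B0 i j)))
  have hB1Wx : ∀ i, HasDerivAt (fun x' => B1.mulVec (W x' t) i) (B1.mulVec wx i) x := by
    intro i
    simpa [Matrix.mulVec, dotProduct] using
      (HasDerivAt.fun_sum (u := Finset.univ) (fun j _ => (hWx j).const_mul (B1 i j)))
  have hB0Wt : ∀ i, HasDerivAt (fun t' => B0.mulVec (W x t') i) (B0.mulVec wt i) t := by
    intro i
    simpa [Matrix.mulVec, dotProduct] using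
      (HasDerivAt.fun_sum (u := Finset.univ) (fun j _ => (hWt j).const_mul (B0 i j)))
  have hEV : B1.mulVec vx + B0.mulVec vt = (A x t).mulVec v := by
    funext i
    have := heqV x t i
    rw [(hB1Vx i).deriv, (hB0Vt i).deriv] at this
    simpa using this
  have hEW : B1.mulVec wx + B0.mulVec wt = (A x t).mulVec w := by
    funext i
    have := heqW x t i
    rw [(hB1Wx i).deriv, (hB0Wt i).deriv] at this
    simpa using this
  have hD1 : HasDerivAt (fun x' => dotProduct (W x' t) (B1.mulVec (V x' t)))
      (dotProduct wx (B1.mulVec v) + dotProduct w (B1.mulVec vx)) x := by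
    have := HasDerivAt.fun_sum (fun i (_ : i ∈ Finset.univ) => (hWx i).mul (hB1Vx i))
    simpa [dotProduct, Finset.sum_add_distrib] using this
  have hD0 : HasDerivAt (fun t' => dotProduct (W x t') (B0.mulVec (V x t')))
      (dotProduct wt (B0.mulVec v) + dotProduct w (B0.mulVec vt)) t := by
    have := HasDerivAt.fun_sum (fun i (_ : i ∈ Finset.univ) => (hWt i).mul (hB0Vt i))
    simpa [dotProduct, Finset.sum_add_distrib] using this
  rw [hD1.deriv, hD0.deriv]
  -- algebra
  have h1 : dotProduct w (B1.mulVec vx) + dotProduct w (B0.mulVec vt)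
      = dotProduct (Matrix.mulVec (A x t) w) v := by
    rw [← dotProduct_add, hEV, Matrix.dotProduct_mulVec, ← Matrix.mulVec_transpose,
      hA]
  have h2 : dotProduct wx (B1.mulVec v)
      = -dotProduct (B1.mulVec wx) v := by
    rw [Matrix.dotProduct_mulVec, ← Matrix.mulVec_transpose, hB1, Matrix.neg_mulVec,
      neg_dotProduct]
  have h3 : dotProduct wt (B0.mulVec v)
      = -dotProduct (B0.mulVec wt) v := by
    rw [Matrix.dotProduct_mulVec, ← Matrix.mulVec_transpose, hB0, Matrix.neg_mulVec,
      neg_dotProduct]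
  have h4 : dotProduct (B1.mulVec wx) v + dotProduct (B0.mulVec wt) v
      = dotProduct (Matrix.mulVec (A x t) w) v := by
    rw [← add_dotProduct, hEW]
  linarith
end

section
/- Let U be a finite regular subset of ℤ² and L : ℝ⁴ → ℝ a C² discrete Lagrangian. Suppose φ : cl U → ℝ solves the discrete Euler–Lagrange equations at every interior point of U, and V, W are first-variation solutions at φ. Then Σ over boundary points (i,j) ∈ ∂U, and over rectangles □ ⊆ U with (i,j) = □^l, of Σ_{k=1}^4 (∂²L/∂y_k∂y_l)(φ(□^1),…,φ(□^4))·(V(□^k)W(□^l) − V(□^l)W(□^k)) equals 0 (the discrete multisymplectic form formula). -/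
open scoped BigOperators

/-- The four vertices of the grid rectangle with base point `b`. -/
def vert (b : ℤ × ℤ) : Fin 4 → ℤ × ℤ :=
  ![b, (b.1 + 1, b.2), (b.1 + 1, b.2 + 1), (b.1, b.2 + 1)]

/-- Base point of the rectangle having `p` as its `l`-th vertex. -/
def rbase (p : ℤ × ℤ) : Fin 4 → ℤ × ℤ :=
  ![p, (p.1 - 1, p.2), (p.1 - 1, p.2 - 1), (p.1, p.2 - 1)]

/-- The values of a field `φ` at the four vertices of the rectangle at `b`. -/
def args (φ : ℤ × ℤ → ℝ) (b : ℤ × ℤ) : Fin 4 → ℝ := fun k => φ (vert b k)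

/-- Standard basis vector of `ℝ⁴`. -/
noncomputable def E4 (l : Fin 4) : Fin 4 → ℝ := Pi.single l 1

/-- Second partial derivative `∂²L/∂y_k∂y_l`. -/
noncomputable def D2 (L : (Fin 4 → ℝ) → ℝ) (a : Fin 4 → ℝ) (k l : Fin 4) : ℝ :=
  fderiv ℝ (fun z => fderiv ℝ L z (E4 l)) a (E4 k)

/-- The rectangle at `b` is contained in `U`. -/
def rectIn (U : Set (ℤ × ℤ)) (b : ℤ × ℤ) : Prop := ∀ k, vert b k ∈ U

/-- Interior points of `U`: all four rectangles touching the point lie in `U`. -/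
def intr (U : Set (ℤ × ℤ)) : Set (ℤ × ℤ) := {p | ∀ l : Fin 4, rectIn U (rbase p l)}

/-- Closure of `U`: union of all cells touching interior points of `U`. -/
def clos (U : Set (ℤ × ℤ)) : Set (ℤ × ℤ) :=
  {q | ∃ p ∈ intr U, ∃ l k, vert (rbase p l) k = q}

/-- Boundary points of `U`. -/
def bdry (U : Set (ℤ × ℤ)) : Set (ℤ × ℤ) := (U ∩ clos U) \ intr U

/-! Every pair `(p, l)` whose rectangle `rbase p l` lies in `U` is the `l`-th corner of exactly
one rectangle of `U`, so the sum of the corner terms over all of `U` can be regrouped rectangle by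
rectangle. On each rectangle it vanishes, because `D2 L` is symmetric while
`V(□^k) W(□^l) - V(□^l) W(□^k)` is antisymmetric in `(k, l)`. At an interior point the four
corner terms add up to `(∑ D2 · V) W p - V p (∑ D2 · W)`, which is zero by the first-variation
equations; what remains of the total is the boundary sum. -/

open Finset

lemma vert_rbase (p : ℤ × ℤ) (l : Fin 4) : vert (rbase p l) l = p := by
  fin_cases l <;> simp [vert, rbase]

lemma rbase_vert (b : ℤ × ℤ) (l : Fin 4) : rbase (vert b l) l = b := by
  fin_cases l <;> simp [vert, rbase]

lemma mem_of_rectIn {U : Set (ℤ × ℤ)} {b : ℤ × ℤ} (h : rectIn U b) : b ∈ U := h 0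

open Classical in
lemma sum_filter_rectIn_rbase (U : Finset (ℤ × ℤ)) (f : ℤ × ℤ → Fin 4 → ℝ) :
    ∑ p ∈ U, ∑ l with rectIn U (rbase p l), f p l =
      ∑ b ∈ U with rectIn U b, ∑ l, f (vert b l) l := by
  rw [sum_comm' (t' := univ) (s' := fun l => {p ∈ U | rectIn U (rbase p l)})
    (by simp), sum_comm]
  refine sum_congr rfl fun l _ => ?_
  refine sum_nbij' (rbase · l) (vert · l) ?_ ?_ ?_ ?_ ?_
  · intro p hp
    simp only [mem_filter] at hp ⊢
    exact ⟨mem_of_rectIn hp.2, hp.2⟩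
  · intro b hb
    simp only [mem_filter, rbase_vert] at hb ⊢
    exact ⟨hb.2 l, hb.2⟩
  · intro p _; exact vert_rbase p l
  · intro b _; exact rbase_vert b l
  · intro p _; simp only [vert_rbase]

lemma finsum_mem_rectIn_rbase {U : Set (ℤ × ℤ)} (hU : U.Finite) (f : ℤ × ℤ → Fin 4 → ℝ) :
    ∑ᶠ p ∈ U, ∑ᶠ l ∈ {l | rectIn U (rbase p l)}, f p l =
      ∑ᶠ b ∈ {b | rectIn U b}, ∑ l, f (vert b l) l := by
  classical
  obtain ⟨s, rfl⟩ := hU.exists_finset_coe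
  have hrect : {b | rectIn (s : Set (ℤ × ℤ)) b} = ↑({b ∈ s | rectIn s b}) := by
    ext b; simpa using fun h => mem_coe.1 (mem_of_rectIn h)
  simp only [finsum_mem_coe_finset, finsum_mem_eq_toFinset_sum, Set.toFinset_ofPred, hrect]
  exact sum_filter_rectIn_rbase s f

noncomputable def cornerForm (L : (Fin 4 → ℝ) → ℝ) (φ V W : ℤ × ℤ → ℝ) (p : ℤ × ℤ)
    (l : Fin 4) : ℝ :=
  ∑ k : Fin 4, D2 L (args φ (rbase p l)) k l *
    (V (vert (rbase p l) k) * W p - V p * W (vert (rbase p l) k))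

lemma D2_comm {L : (Fin 4 → ℝ) → ℝ} (hL : ContDiff ℝ 2 L) (a : Fin 4 → ℝ) (k l : Fin 4) :
    D2 L a k l = D2 L a l k := by
  have hd : DifferentiableAt ℝ (fderiv ℝ L) a :=
    (hL.fderiv_right (m := 1) le_rfl).differentiable one_ne_zero a
  have hD2 : ∀ m j : Fin 4, D2 L a m j = fderiv ℝ (fderiv ℝ L) a (E4 m) (E4 j) := by
    intro m j
    simp [D2, fderiv_clm_apply hd (differentiableAt_const (E4 j))]
  rw [hD2, hD2]
  exact hL.contDiffAt.isSymmSndFDerivAt (by simp) (E4 k) (E4 l)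

lemma sum_cornerForm_vert {L : (Fin 4 → ℝ) → ℝ} (hL : ContDiff ℝ 2 L) (φ V W : ℤ × ℤ → ℝ)
    (b : ℤ × ℤ) : ∑ l, cornerForm L φ V W (vert b l) l = 0 := by
  set A : Fin 4 → Fin 4 → ℝ := fun l k => D2 L (args φ b) k l *
    (V (vert b k) * W (vert b l) - V (vert b l) * W (vert b k))
  have hA : ∀ l k, A l k + A k l = 0 := fun l k => by
    simp only [A, D2_comm hL (args φ b) l k]; ring
  have hsum : ∑ l, ∑ k, A l k + ∑ l, ∑ k, A l k = 0 := by
    nth_rewrite 2 [sum_comm]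
    simp only [← sum_add_distrib, hA, sum_const_zero]
  simp only [cornerForm, rbase_vert]
  linarith

lemma cornerForm_eq (L : (Fin 4 → ℝ) → ℝ) (φ V W : ℤ × ℤ → ℝ) (p : ℤ × ℤ) (l : Fin 4) :
    cornerForm L φ V W p l =
      (∑ k, D2 L (args φ (rbase p l)) k l * V (vert (rbase p l) k)) * W p -
        V p * ∑ k, D2 L (args φ (rbase p l)) k l * W (vert (rbase p l) k) := by
  rw [sum_mul, mul_sum, ← sum_sub_distrib]
  exact sum_congr rfl fun k _ => by ring

lemma sum_cornerForm_of_firstVariation (L : (Fin 4 → ℝ) → ℝ) (φ V W : ℤ × ℤ → ℝ) (p : ℤ × ℤ)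
    (hV : ∑ l, ∑ k, D2 L (args φ (rbase p l)) k l * V (vert (rbase p l) k) = 0)
    (hW : ∑ l, ∑ k, D2 L (args φ (rbase p l)) k l * W (vert (rbase p l) k) = 0) :
    ∑ l, cornerForm L φ V W p l = 0 := by
  simp only [cornerForm_eq, sum_sub_distrib, ← sum_mul, ← mul_sum, hV, hW, zero_mul, mul_zero,
    sub_zero]

theorem stmt14_general (U : Set (ℤ × ℤ)) (hUfin : U.Finite)
    (hreg : U = intr U ∪ bdry U)
    (L : (Fin 4 → ℝ) → ℝ) (hL : ContDiff ℝ 2 L)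
    (φ V W : ℤ × ℤ → ℝ)
    (hV : ∀ p ∈ intr U, ∑ l : Fin 4, ∑ k : Fin 4,
      D2 L (args φ (rbase p l)) k l * V (vert (rbase p l) k) = 0)
    (hW : ∀ p ∈ intr U, ∑ l : Fin 4, ∑ k : Fin 4,
      D2 L (args φ (rbase p l)) k l * W (vert (rbase p l) k) = 0) :
    ∑ᶠ p ∈ bdry U, ∑ᶠ l ∈ {l : Fin 4 | rectIn U (rbase p l)}, ∑ k : Fin 4,
      D2 L (args φ (rbase p l)) k l *
        (V (vert (rbase p l) k) * W p - V p * W (vert (rbase p l) k)) = 0 := by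
  set F : ℤ × ℤ → ℝ := fun p => ∑ᶠ l ∈ {l | rectIn U (rbase p l)}, cornerForm L φ V W p l
  have htotal : ∑ᶠ p ∈ U, F p = 0 := by
    rw [finsum_mem_rectIn_rbase hUfin]
    exact finsum_mem_of_eqOn_zero fun b _ => sum_cornerForm_vert hL φ V W b
  have hinterior : ∑ᶠ p ∈ intr U, F p = 0 := finsum_mem_of_eqOn_zero fun p hp => by
    have hall : {l | rectIn U (rbase p l)} = Set.univ := Set.eq_univ_of_forall hp
    simp only [F, Pi.zero_apply, hall, Set.mem_univ, finsum_true, finsum_eq_sum_of_fintype]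
    exact sum_cornerForm_of_firstVariation L φ V W p (hV p hp) (hW p hp)
  have hsplit := finsum_mem_union (f := F) (s := intr U) (t := bdry U) disjoint_sdiff_self_right
    (hUfin.subset (Set.subset_union_left.trans hreg.symm.subset))
    (hUfin.subset (Set.subset_union_right.trans hreg.symm.subset))
  rw [← hreg, htotal, hinterior, zero_add] at hsplit
  exact hsplit.symm

/-- The discrete multisymplectic form formula: for a solution `φ` of the discrete
Euler–Lagrange equations and first-variation solutions `V`, `W`, the boundary sum of
the discrete multisymplectic 2-forms evaluated on `(V, W)` vanishes. -/
theorem stmt14 (U : Set (ℤ × ℤ)) (hUfin : U.Finite)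
    (hreg : U = intr U ∪ bdry U)
    (L : (Fin 4 → ℝ) → ℝ) (hL : ContDiff ℝ 2 L)
    (φ V W : ℤ × ℤ → ℝ)
    (hφ : ∀ p ∈ intr U, ∑ l : Fin 4, fderiv ℝ L (args φ (rbase p l)) (E4 l) = 0)
    (hV : ∀ p ∈ intr U, ∑ l : Fin 4, ∑ k : Fin 4,
      D2 L (args φ (rbase p l)) k l * V (vert (rbase p l) k) = 0)
    (hW : ∀ p ∈ intr U, ∑ l : Fin 4, ∑ k : Fin 4,
      D2 L (args φ (rbase p l)) k l * W (vert (rbase p l) k) = 0) :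
    ∑ᶠ p ∈ bdry U, ∑ᶠ l ∈ {l : Fin 4 | rectIn U (rbase p l)}, ∑ k : Fin 4,
      D2 L (args φ (rbase p l)) k l *
        (V (vert (rbase p l) k) * W p - V p * W (vert (rbase p l) k)) = 0 :=
  stmt14_general U hUfin hreg L hL φ V W hV hW
end
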